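/- For all rooted graphs F_R and G_S, the limit as ℓ → ∞ of the smallest eigenvalue of the path augmentation (F_R, ℓ, G_S) equals the minimum of lim_{ℓ→∞} λ₁(F_R, ℓ) and lim_{ℓ→∞} λ₁(G_S, ℓ). -/

import Mathlib

open Matrix Filter
open scoped Classical

noncomputable def adjM {α : Type*} [Fintype α] (G : SimpleGraph α) : Matrix α α ℝ :=
  fun x y => if G.Adj x y then 1 else 0

noncomputable def minEig {α : Type*} [Fintype α] (G : SimpleGraph α) : ℝ :=
  sInf {μ : ℝ | ∃ x : α → ℝ, x ≠ 0 ∧ adjM G *ᵥ x = μ • x}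

/-- The path extension `(F_R, ℓ)`: add a path `v_0 … v_ℓ` (vertices `Fin (ℓ+1)`) to `F`,
joining `v_0` to every vertex of the root set `R`. -/
def pathExt {V : Type*} (F : SimpleGraph V) (R : Set V) (ℓ : ℕ) :
    SimpleGraph (V ⊕ Fin (ℓ + 1)) :=
  SimpleGraph.fromRel (fun x y =>
    match x, y with
    | Sum.inl u, Sum.inl v => F.Adj u v
    | Sum.inl u, Sum.inr i => u ∈ R ∧ (i : ℕ) = 0
    | Sum.inr i, Sum.inr j => (j : ℕ) = (i : ℕ) + 1
    | _, _ => False)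

/-- The path augmentation `(F_R, ℓ, G_S)`: to the disjoint union of `F` and `G`, add a
path `v_0 … v_ℓ`, joining `v_0` to every vertex of `R` and `v_ℓ` to every vertex of `S`. -/
def pathAug {V W : Type*} (F : SimpleGraph V) (R : Set V) (G : SimpleGraph W) (S : Set W)
    (ℓ : ℕ) : SimpleGraph (V ⊕ W ⊕ Fin (ℓ + 1)) :=
  SimpleGraph.fromRel (fun x y =>
    match x, y with
    | Sum.inl u, Sum.inl v => F.Adj u v
    | Sum.inr (Sum.inl u), Sum.inr (Sum.inl v) => G.Adj u v
    | Sum.inl u, Sum.inr (Sum.inr i) => u ∈ R ∧ (i : ℕ) = 0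
    | Sum.inr (Sum.inl u), Sum.inr (Sum.inr i) => u ∈ S ∧ (i : ℕ) = ℓ
    | Sum.inr (Sum.inr i), Sum.inr (Sum.inr j) => (j : ℕ) = (i : ℕ) + 1
    | _, _ => False)

/-!
Upper bound: `(F_R, ℓ)` and, with the path reversed, `(G_S, ℓ)` are induced subgraphs of
`(F_R, ℓ, G_S)`, and by the Rayleigh quotient `λ₁` of a graph is at most `λ₁` of any induced
subgraph. The same monotonicity makes `ℓ ↦ λ₁(F_R, ℓ)` antitone, so its limit `a` bounds every
term from below.

Lower bound: let `x` be an eigenvector for `λ₁(F_R, n + 1, G_S)`. By averaging there is an inner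
path vertex `v_{p+1}` such that `x` carries weight at most `3‖x‖² / n` on `v_p, v_{p+1}, v_{p+2}`.
Cutting the path at `v_{p+1}` splits `x` into vectors on `(F_R, p)` and on `(G_S, q)`, and the
quadratic form of the adjacency matrix only changes by the two edges at `v_{p+1}`. Hence
`λ₁(F_R, n + 1, G_S) ≥ min a b - 6 / n`.
-/

open Finset SimpleGraph

namespace Matrix

variable {α : Type*} [Fintype α] [DecidableEq α]

theorem setOf_exists_mulVec_eq_smul_eq_spectrum (A : Matrix α α ℝ) :
    {μ : ℝ | ∃ x : α → ℝ, x ≠ 0 ∧ A *ᵥ x = μ • x} = spectrum ℝ A := by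
  ext μ
  rw [spectrum.mem_iff, isUnit_iff_isUnit_det, isUnit_iff_ne_zero, not_not,
    ← exists_mulVec_eq_zero_iff]
  simp [sub_mulVec, Algebra.algebraMap_eq_smul_one, smul_mulVec, sub_eq_zero, eq_comm]

theorem IsHermitian.mul_dotProduct_self_le_dotProduct_mulVec {A : Matrix α α ℝ}
    (hA : A.IsHermitian) {m : ℝ} (hm : ∀ i, m ≤ hA.eigenvalues i) (x : α → ℝ) :
    m * (x ⬝ᵥ x) ≤ x ⬝ᵥ (A *ᵥ x) := by
  set b := hA.eigenvectorBasis
  have parseval : ∀ y : α → ℝ, x ⬝ᵥ y = ∑ i, (b i ⬝ᵥ x) * (b i ⬝ᵥ y) := fun y => by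
    simpa [EuclideanSpace.inner_eq_star_dotProduct, dotProduct_comm] using
      (b.sum_inner_mul_inner (WithLp.toLp 2 x) (WithLp.toLp 2 y)).symm
  have hb : ∀ i, b i ⬝ᵥ (A *ᵥ x) = hA.eigenvalues i * (b i ⬝ᵥ x) := fun i => by
    rw [dotProduct_mulVec, ← mulVec_transpose, ← conjTranspose_eq_transpose_of_trivial, hA.eq,
      hA.mulVec_eigenvectorBasis, smul_dotProduct, smul_eq_mul]
  rw [parseval, parseval, mul_sum]
  refine sum_le_sum fun i _ => ?_
  rw [hb]
  linarith [mul_le_mul_of_nonneg_right (hm i) (mul_self_nonneg (b i ⬝ᵥ x))]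

end Matrix

section MinEig

variable {α β : Type*} [Fintype α] [Fintype β]

lemma dotProduct_mulVec_adjM (G : SimpleGraph α) (x : α → ℝ) :
    x ⬝ᵥ (adjM G *ᵥ x) = ∑ a, ∑ b, if G.Adj a b then x a * x b else 0 :=
  G.dotProduct_mulVec_adjMatrix x x

lemma isHermitian_adjM (G : SimpleGraph α) : (adjM G).IsHermitian :=
  G.isHermitian_adjMatrix ℝ

lemma minEig_eq_sInf_range_eigenvalues (G : SimpleGraph α) :
    minEig G = sInf (Set.range (isHermitian_adjM G).eigenvalues) := by
  rw [minEig, Matrix.setOf_exists_mulVec_eq_smul_eq_spectrum,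
    (isHermitian_adjM G).spectrum_real_eq_range_eigenvalues]

lemma exists_mulVec_eq_minEig_smul [Nonempty α] (G : SimpleGraph α) :
    ∃ x : α → ℝ, x ≠ 0 ∧ adjM G *ᵥ x = minEig G • x := by
  have h : minEig G ∈ Set.range (isHermitian_adjM G).eigenvalues := by
    rw [minEig_eq_sInf_range_eigenvalues]
    exact (Set.range_nonempty _).csInf_mem (Set.finite_range _)
  rwa [← (isHermitian_adjM G).spectrum_real_eq_range_eigenvalues,
    ← Matrix.setOf_exists_mulVec_eq_smul_eq_spectrum] at h

lemma minEig_mul_dotProduct_self_le (G : SimpleGraph α) (x : α → ℝ) :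
    minEig G * (x ⬝ᵥ x) ≤ x ⬝ᵥ (adjM G *ᵥ x) :=
  (isHermitian_adjM G).mul_dotProduct_self_le_dotProduct_mulVec (fun i => by
    rw [minEig_eq_sInf_range_eigenvalues]
    exact csInf_le (Set.finite_range _).bddBelow ⟨i, rfl⟩) x

lemma minEig_nonpos [Nonempty α] (G : SimpleGraph α) : minEig G ≤ 0 := by
  obtain ⟨a⟩ := ‹Nonempty α›
  simpa [adjM] using minEig_mul_dotProduct_self_le G (Pi.single a 1)

lemma minEig_le_of_embedding [Nonempty α] {H : SimpleGraph α} {G : SimpleGraph β}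
    (f : H ↪g G) : minEig G ≤ minEig H := by
  obtain ⟨x, hx, hHx⟩ := exists_mulVec_eq_minEig_smul H
  set y := Function.extend f x 0
  have hy : ∀ b ∉ Set.range f, y b = 0 := fun b hb => by
    simp [y, Function.extend_apply' _ _ _ (by simpa using hb)]
  have hyf : ∀ a, y (f a) = x a := f.injective.extend_apply _ _
  have hyy : y ⬝ᵥ y = x ⬝ᵥ x :=
    (Fintype.sum_of_injective f f.injective _ _ (fun b hb => by simp [hy b hb])
      (by simp [hyf])).symm
  have hQ : y ⬝ᵥ (adjM G *ᵥ y) = x ⬝ᵥ (adjM H *ᵥ x) := by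
    simp only [dotProduct_mulVec_adjM]
    refine (Fintype.sum_of_injective f f.injective _ _ (fun b hb => by simp [hy b hb])
      fun a => ?_).symm
    exact Fintype.sum_of_injective f f.injective _ _ (fun b hb => by simp [hy b hb])
      (by simp [hyf])
  have key := minEig_mul_dotProduct_self_le G y
  rw [hyy, hQ, hHx, dotProduct_smul, smul_eq_mul] at key
  exact le_of_mul_le_mul_right key (by simpa using dotProduct_star_self_pos_iff.mpr hx)

end MinEig

section Adjacency

variable {V W : Type*} (F : SimpleGraph V) (R : Set V) (G : SimpleGraph W) (S : Set W) (ℓ : ℕ)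

@[simp]
lemma pathExt_adj_inl_inl {u v : V} : (pathExt F R ℓ).Adj (.inl u) (.inl v) ↔ F.Adj u v := by
  simp [pathExt, F.adj_comm v u]
  exact fun h => h.ne

@[simp]
lemma pathExt_adj_inl_inr {u : V} {i : Fin (ℓ + 1)} :
    (pathExt F R ℓ).Adj (.inl u) (.inr i) ↔ u ∈ R ∧ i = 0 := by
  simp [pathExt]

@[simp]
lemma pathExt_adj_inr_inl {u : V} {i : Fin (ℓ + 1)} :
    (pathExt F R ℓ).Adj (.inr i) (.inl u) ↔ u ∈ R ∧ i = 0 := by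
  simp [pathExt]

@[simp]
lemma pathExt_adj_inr_inr {i j : Fin (ℓ + 1)} :
    (pathExt F R ℓ).Adj (.inr i) (.inr j) ↔ (pathGraph (ℓ + 1)).Adj i j := by
  simp only [pathExt, fromRel_adj, pathGraph_adj, ne_eq, Sum.inr.injEq, Fin.ext_iff]
  omega

@[simp]
lemma pathAug_adj_inl_inl {u v : V} : (pathAug F R G S ℓ).Adj (.inl u) (.inl v) ↔ F.Adj u v := by
  simp [pathAug, F.adj_comm v u]
  exact fun h => h.ne

@[simp]
lemma pathAug_adj_inl_inr_inl {u : V} {v : W} :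
    ¬ (pathAug F R G S ℓ).Adj (.inl u) (.inr (.inl v)) := by
  simp [pathAug]

@[simp]
lemma pathAug_adj_inr_inl_inl {u : V} {v : W} :
    ¬ (pathAug F R G S ℓ).Adj (.inr (.inl v)) (.inl u) := by
  simp [pathAug]

@[simp]
lemma pathAug_adj_inr_inl_inr_inl {u v : W} :
    (pathAug F R G S ℓ).Adj (.inr (.inl u)) (.inr (.inl v)) ↔ G.Adj u v := by
  simp [pathAug, G.adj_comm v u]
  exact fun h => h.ne

@[simp]
lemma pathAug_adj_inl_inr_inr {u : V} {i : Fin (ℓ + 1)} :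
    (pathAug F R G S ℓ).Adj (.inl u) (.inr (.inr i)) ↔ u ∈ R ∧ i = 0 := by
  simp [pathAug]

@[simp]
lemma pathAug_adj_inr_inr_inl {u : V} {i : Fin (ℓ + 1)} :
    (pathAug F R G S ℓ).Adj (.inr (.inr i)) (.inl u) ↔ u ∈ R ∧ i = 0 := by
  simp [pathAug]

@[simp]
lemma pathAug_adj_inr_inl_inr_inr {u : W} {i : Fin (ℓ + 1)} :
    (pathAug F R G S ℓ).Adj (.inr (.inl u)) (.inr (.inr i)) ↔ u ∈ S ∧ i = Fin.last ℓ := by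
  simp only [pathAug, fromRel_adj, ne_eq, Sum.inr.injEq, reduceCtorEq, not_false_eq_true,
    true_and, or_false, Fin.ext_iff, Fin.val_last]

@[simp]
lemma pathAug_adj_inr_inr_inr_inl {u : W} {i : Fin (ℓ + 1)} :
    (pathAug F R G S ℓ).Adj (.inr (.inr i)) (.inr (.inl u)) ↔ u ∈ S ∧ i = Fin.last ℓ := by
  simp only [pathAug, fromRel_adj, ne_eq, Sum.inr.injEq, reduceCtorEq, not_false_eq_true,
    true_and, false_or, Fin.ext_iff, Fin.val_last]

@[simp]
lemma pathAug_adj_inr_inr_inr_inr {i j : Fin (ℓ + 1)} :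
    (pathAug F R G S ℓ).Adj (.inr (.inr i)) (.inr (.inr j)) ↔ (pathGraph (ℓ + 1)).Adj i j := by
  simp only [pathAug, fromRel_adj, pathGraph_adj, ne_eq, Sum.inr.injEq, Fin.ext_iff]
  omega

def pathExtEmbeddingSucc : pathExt F R ℓ ↪g pathExt F R (ℓ + 1) where
  toFun := Sum.map id Fin.castSucc
  inj' := Sum.map_injective.mpr ⟨Function.injective_id, Fin.castSucc_injective _⟩
  map_rel_iff' := by rintro (u | i) (v | j) <;> simp [pathGraph_adj]

def pathExtEmbeddingPathAugLeft : pathExt F R ℓ ↪g pathAug F R G S ℓ where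
  toFun := Sum.map id Sum.inr
  inj' := Sum.map_injective.mpr ⟨Function.injective_id, Sum.inr_injective⟩
  map_rel_iff' := by rintro (u | i) (v | j) <;> simp

def pathExtEmbeddingPathAugRight : pathExt G S ℓ ↪g pathAug F R G S ℓ where
  toFun := Sum.elim (Sum.inr ∘ Sum.inl) (Sum.inr ∘ Sum.inr ∘ Fin.rev)
  inj' := (Sum.inr_injective.comp Sum.inl_injective).sumElim
    (Sum.inr_injective.comp (Sum.inr_injective.comp Fin.rev_injective)) (by simp)
  map_rel_iff' := by
    rintro (u | i) (v | j) <;> simp [pathGraph_adj, Fin.rev_eq_iff, Fin.val_rev]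
    all_goals omega

end Adjacency

section QuadraticForms

lemma sum_range_sum_range_ite_succ_eq (n : ℕ) (c : ℕ → ℝ) :
    ∑ i ∈ range (n + 1), ∑ j ∈ range (n + 1),
      (if i + 1 = j ∨ j + 1 = i then c i * c j else 0)
      = 2 * ∑ i ∈ range n, c i * c (i + 1) := by
  have hsplit : ∀ i j : ℕ, (if i + 1 = j ∨ j + 1 = i then c i * c j else 0)
      = (if i + 1 = j then c i * c j else 0) + (if j + 1 = i then c j * c i else 0) := by
    intro i j
    by_cases h : i + 1 = j
    · have h' : j + 1 ≠ i := by omega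
      simp [h, h']
    · by_cases h' : j + 1 = i <;> simp [h, h', mul_comm]
  simp only [hsplit, sum_add_distrib]
  rw [sum_comm (f := fun i j => if j + 1 = i then c j * c i else 0)]
  have hlt : ∀ i ∈ range n, i < n := fun i => mem_range.mp
  simp [sum_range_succ, two_mul, sum_ite_of_true hlt]

lemma sum_sum_ite_pathGraph_adj (n : ℕ) (c : ℕ → ℝ) :
    ∑ i : Fin (n + 1), ∑ j : Fin (n + 1),
      (if (pathGraph (n + 1)).Adj i j then c i * c j else 0)
      = 2 * ∑ i ∈ range n, c i * c (i + 1) := by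
  simp only [pathGraph_adj]
  rw [← sum_range_sum_range_ite_succ_eq, ← Fin.sum_univ_eq_sum_range]
  refine sum_congr rfl fun i _ => ?_
  rw [← Fin.sum_univ_eq_sum_range]

variable {V W : Type*} [Fintype V] [Fintype W] (F : SimpleGraph V) (R : Set V)
  (G : SimpleGraph W) (S : Set W) (ℓ : ℕ)

lemma dotProduct_mulVec_adjM_pathExt (u : V → ℝ) (c : ℕ → ℝ) :
    Sum.elim u (fun i : Fin (ℓ + 1) => c i) ⬝ᵥ
        (adjM (pathExt F R ℓ) *ᵥ Sum.elim u (fun i : Fin (ℓ + 1) => c i)) =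
      u ⬝ᵥ (adjM F *ᵥ u) + 2 * c 0 * ∑ r with r ∈ R, u r
        + 2 * ∑ i ∈ range ℓ, c i * c (i + 1) := by
  simp only [dotProduct_mulVec_adjM, Fintype.sum_sum_type, Sum.elim_inl, Sum.elim_inr,
    pathExt_adj_inl_inl, pathExt_adj_inr_inr, pathExt_adj_inl_inr, pathExt_adj_inr_inl,
    sum_add_distrib, sum_sum_ite_pathGraph_adj]
  simp [ite_and, sum_ite, ← sum_mul, ← mul_sum]
  ring

lemma dotProduct_mulVec_adjM_pathAug (u : V → ℝ) (w : W → ℝ) (c : ℕ → ℝ) :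
    Sum.elim u (Sum.elim w (fun i : Fin (ℓ + 1) => c i)) ⬝ᵥ
        (adjM (pathAug F R G S ℓ) *ᵥ Sum.elim u (Sum.elim w (fun i : Fin (ℓ + 1) => c i))) =
      u ⬝ᵥ (adjM F *ᵥ u) + 2 * c 0 * ∑ r with r ∈ R, u r
        + (w ⬝ᵥ (adjM G *ᵥ w) + 2 * c ℓ * ∑ s with s ∈ S, w s)
        + 2 * ∑ i ∈ range ℓ, c i * c (i + 1) := by
  simp only [dotProduct_mulVec_adjM, Fintype.sum_sum_type, Sum.elim_inl, Sum.elim_inr,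
    pathAug_adj_inl_inl, pathAug_adj_inl_inr_inl, pathAug_adj_inr_inl_inl,
    pathAug_adj_inr_inl_inr_inl, pathAug_adj_inl_inr_inr, pathAug_adj_inr_inr_inl,
    pathAug_adj_inr_inl_inr_inr, pathAug_adj_inr_inr_inr_inl, pathAug_adj_inr_inr_inr_inr,
    sum_add_distrib, sum_sum_ite_pathGraph_adj]
  simp [ite_and, sum_ite, ← sum_mul, ← mul_sum]
  ring

lemma dotProduct_self_pathExt (u : V → ℝ) (c : ℕ → ℝ) :
    Sum.elim u (fun i : Fin (ℓ + 1) => c i) ⬝ᵥ Sum.elim u (fun i : Fin (ℓ + 1) => c i) =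
      u ⬝ᵥ u + ∑ i ∈ range (ℓ + 1), c i ^ 2 := by
  simp [dotProduct, Fintype.sum_sum_type, Fin.sum_univ_eq_sum_range (fun i => c i * c i), sq]

lemma dotProduct_self_pathAug (u : V → ℝ) (w : W → ℝ) (c : ℕ → ℝ) :
    Sum.elim u (Sum.elim w (fun i : Fin (ℓ + 1) => c i)) ⬝ᵥ
        Sum.elim u (Sum.elim w (fun i : Fin (ℓ + 1) => c i)) =
      u ⬝ᵥ u + w ⬝ᵥ w + ∑ i ∈ range (ℓ + 1), c i ^ 2 := by
  simp [dotProduct, Fintype.sum_sum_type, Fin.sum_univ_eq_sum_range (fun i => c i * c i), sq,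
    add_assoc]

end QuadraticForms

section Cut

lemma sum_range_mul_succ_split (c : ℕ → ℝ) (p q : ℕ) :
    ∑ i ∈ range (p + 2 + q), c i * c (i + 1) = ∑ i ∈ range p, c i * c (i + 1)
      + c (p + 1) * (c p + c (p + 2))
      + ∑ j ∈ range q, c (p + 2 + q - j) * c (p + 2 + q - (j + 1)) := by
  rw [sum_range_add, sum_range_succ, sum_range_succ,
    ← sum_range_reflect (fun j => c (p + 2 + q - j) * c (p + 2 + q - (j + 1)))]
  have hrefl : ∀ j ∈ range q, c (p + 2 + j) * c (p + 2 + j + 1)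
      = c (p + 2 + q - (q - 1 - j)) * c (p + 2 + q - (q - 1 - j + 1)) := fun j hj => by
    have hj := mem_range.mp hj
    rw [show p + 2 + q - (q - 1 - j) = p + 2 + j + 1 by omega,
      show p + 2 + q - (q - 1 - j + 1) = p + 2 + j by omega, mul_comm]
  rw [sum_congr rfl hrefl]
  ring

lemma sum_range_sq_split (c : ℕ → ℝ) (p q : ℕ) :
    ∑ i ∈ range (p + 2 + q + 1), c i ^ 2 = ∑ i ∈ range (p + 1), c i ^ 2 + c (p + 1) ^ 2
      + ∑ j ∈ range (q + 1), c (p + 2 + q - j) ^ 2 := by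
  rw [show p + 2 + q + 1 = p + 1 + 1 + (q + 1) by omega, sum_range_add, sum_range_succ,
    ← sum_range_reflect (fun j => c (p + 2 + q - j) ^ 2)]
  have hrefl : ∀ j ∈ range (q + 1),
      c (p + 1 + 1 + j) ^ 2 = c (p + 2 + q - (q + 1 - 1 - j)) ^ 2 := fun j hj => by
    have hj := mem_range.mp hj
    rw [show p + 2 + q - (q + 1 - 1 - j) = p + 1 + 1 + j by omega]
  rw [sum_congr rfl hrefl]

variable {V W : Type*} [Fintype V] [Fintype W] (F : SimpleGraph V) (R : Set V)
  (G : SimpleGraph W) (S : Set W)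

lemma le_dotProduct_mulVec_adjM_pathAug {p q ℓ : ℕ} (hℓ : p + 2 + q = ℓ) (u : V → ℝ)
    (w : W → ℝ) (c : ℕ → ℝ) :
    min (minEig (pathExt F R p)) (minEig (pathExt G S q))
        * (Sum.elim u (Sum.elim w (fun i : Fin (ℓ + 1) => c i)) ⬝ᵥ
          Sum.elim u (Sum.elim w (fun i : Fin (ℓ + 1) => c i)))
      - (c p ^ 2 + 2 * c (p + 1) ^ 2 + c (p + 2) ^ 2)
      ≤ Sum.elim u (Sum.elim w (fun i : Fin (ℓ + 1) => c i)) ⬝ᵥ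
          (adjM (pathAug F R G S ℓ) *ᵥ Sum.elim u (Sum.elim w (fun i : Fin (ℓ + 1) => c i))) := by
  subst hℓ
  set x := Sum.elim u (Sum.elim w (fun i : Fin (p + 2 + q + 1) => c i))
  set yF := Sum.elim u (fun i : Fin (p + 1) => c i)
  -- `G_S` hangs at `v_ℓ`, so the path of `(G_S, q)` is read backwards from `v_ℓ` to `v_{p+2}`
  set c' : ℕ → ℝ := fun j => c (p + 2 + q - j)
  set yG := Sum.elim w (fun j : Fin (q + 1) => c' j)
  have hQ := dotProduct_mulVec_adjM_pathAug F R G S (p + 2 + q) u w c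
  have hQF := dotProduct_mulVec_adjM_pathExt F R p u c
  have hQG := dotProduct_mulVec_adjM_pathExt G S q w c'
  have hN := dotProduct_self_pathAug (p + 2 + q) u w c
  have hNF := dotProduct_self_pathExt p u c
  have hNG := dotProduct_self_pathExt q w c'
  rw [sum_range_mul_succ_split] at hQ
  rw [sum_range_sq_split] at hN
  simp only [c', Nat.sub_zero] at hQG hNG
  set m := min (minEig (pathExt F R p)) (minEig (pathExt G S q))
  have hQsplit : x ⬝ᵥ (adjM (pathAug F R G S (p + 2 + q)) *ᵥ x)
      = yF ⬝ᵥ (adjM (pathExt F R p) *ᵥ yF) + yG ⬝ᵥ (adjM (pathExt G S q) *ᵥ yG)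
        + 2 * c (p + 1) * (c p + c (p + 2)) := by
    rw [hQ, hQF, hQG]; ring
  have hNsplit : x ⬝ᵥ x = yF ⬝ᵥ yF + yG ⬝ᵥ yG + c (p + 1) ^ 2 := by
    rw [hN, hNF, hNG]; ring
  have hF : m * (yF ⬝ᵥ yF) ≤ yF ⬝ᵥ (adjM (pathExt F R p) *ᵥ yF) :=
    (mul_le_mul_of_nonneg_right (min_le_left _ _) (sum_nonneg fun i _ => mul_self_nonneg _)).trans
      (minEig_mul_dotProduct_self_le _ _)
  have hG : m * (yG ⬝ᵥ yG) ≤ yG ⬝ᵥ (adjM (pathExt G S q) *ᵥ yG) :=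
    (mul_le_mul_of_nonneg_right (min_le_right _ _) (sum_nonneg fun i _ => mul_self_nonneg _)).trans
      (minEig_mul_dotProduct_self_le _ _)
  have hm : m * c (p + 1) ^ 2 ≤ 0 :=
    mul_nonpos_of_nonpos_of_nonneg ((min_le_left _ _).trans (minEig_nonpos _)) (sq_nonneg _)
  have hcut : -(c p ^ 2 + 2 * c (p + 1) ^ 2 + c (p + 2) ^ 2)
      ≤ 2 * c (p + 1) * (c p + c (p + 2)) := by
    nlinarith [sq_nonneg (c p + c (p + 1)), sq_nonneg (c (p + 1) + c (p + 2))]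
  rw [hQsplit, hNsplit]
  linarith

end Cut

lemma exists_sq_add_sq_add_sq_le (c : ℕ → ℝ) {n : ℕ} (hn : 0 < n) :
    ∃ p < n, c p ^ 2 + c (p + 1) ^ 2 + c (p + 2) ^ 2
      ≤ 3 * (∑ i ∈ range (n + 2), c i ^ 2) / n := by
  have hshift : ∀ k ≤ 2, ∑ p ∈ range n, c (p + k) ^ 2 ≤ ∑ i ∈ range (n + 2), c i ^ 2 := by
    intro k hk
    calc ∑ p ∈ range n, c (p + k) ^ 2
        ≤ ∑ i ∈ range k, c i ^ 2 + ∑ p ∈ range n, c (k + p) ^ 2 := by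
          simp only [add_comm k]
          exact le_add_of_nonneg_left (sum_nonneg fun _ _ => sq_nonneg _)
      _ = ∑ i ∈ range (k + n), c i ^ 2 := (sum_range_add _ _ _).symm
      _ ≤ ∑ i ∈ range (n + 2), c i ^ 2 :=
          sum_le_sum_of_subset_of_nonneg (range_subset_range.mpr (by omega))
            fun _ _ _ => sq_nonneg _
  obtain ⟨p, hp, hle⟩ := exists_le_of_sum_le (nonempty_range_iff.mpr hn.ne')
    (f := fun p => c p ^ 2 + c (p + 1) ^ 2 + c (p + 2) ^ 2)
    (g := fun _ => 3 * (∑ i ∈ range (n + 2), c i ^ 2) / n) (by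
      rw [sum_const, card_range, nsmul_eq_mul, mul_div_cancel₀ _ (by positivity),
        sum_add_distrib, sum_add_distrib]
      have h0 := hshift 0 (by norm_num)
      simp only [add_zero] at h0
      linarith [hshift 1 (by norm_num), hshift 2 le_rfl])
  exact ⟨p, mem_range.mp hp, hle⟩

lemma sub_div_le_minEig_pathAug {V W : Type*} [Fintype V] [Fintype W] (F : SimpleGraph V)
    (R : Set V) (G : SimpleGraph W) (S : Set W) {m : ℝ} (hF : ∀ p, m ≤ minEig (pathExt F R p))
    (hG : ∀ q, m ≤ minEig (pathExt G S q)) {n : ℕ} (hn : 0 < n) :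
    m - 6 / n ≤ minEig (pathAug F R G S (n + 1)) := by
  obtain ⟨x, hx, hAx⟩ := exists_mulVec_eq_minEig_smul (pathAug F R G S (n + 1))
  obtain ⟨u, w, c, rfl⟩ : ∃ u w c, x = Sum.elim u (Sum.elim w fun i : Fin (n + 2) => c i) :=
    ⟨x ∘ Sum.inl, x ∘ Sum.inr ∘ Sum.inl,
      fun i => if h : i < n + 2 then x (Sum.inr (Sum.inr ⟨i, h⟩)) else 0, by
        ext (_ | _ | i) <;> simp⟩
  obtain ⟨p, hp, hc⟩ := exists_sq_add_sq_add_sq_le c hn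
  have hcut := le_dotProduct_mulVec_adjM_pathAug F R G S
    (show p + 2 + (n - 1 - p) = n + 1 by omega) u w c
  set x := Sum.elim u (Sum.elim w fun i : Fin (n + 2) => c i)
  rw [hAx, dotProduct_smul, smul_eq_mul] at hcut
  have hpos : 0 < x ⬝ᵥ x := by simpa using dotProduct_star_self_pos_iff.mpr hx
  have hcx : ∑ i ∈ range (n + 2), c i ^ 2 ≤ x ⬝ᵥ x := by
    rw [dotProduct_self_pathAug]
    show _ ≤ u ⬝ᵥ u + w ⬝ᵥ w + ∑ i ∈ range (n + 2), c i ^ 2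
    have hu : 0 ≤ u ⬝ᵥ u := sum_nonneg fun i _ => mul_self_nonneg (u i)
    have hw : 0 ≤ w ⬝ᵥ w := sum_nonneg fun i _ => mul_self_nonneg (w i)
    linarith
  have hm : m * (x ⬝ᵥ x)
      ≤ min (minEig (pathExt F R p)) (minEig (pathExt G S (n - 1 - p))) * (x ⬝ᵥ x) :=
    mul_le_mul_of_nonneg_right (le_min (hF p) (hG _)) hpos.le
  have hweight : c p ^ 2 + 2 * c (p + 1) ^ 2 + c (p + 2) ^ 2 ≤ 6 / n * (x ⬝ᵥ x) := by
    have : 3 * (∑ i ∈ range (n + 2), c i ^ 2) / n ≤ 3 * (x ⬝ᵥ x) / n := by gcongr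
    have : 6 / (n : ℝ) * (x ⬝ᵥ x) = 2 * (3 * (x ⬝ᵥ x) / n) := by ring
    nlinarith [sq_nonneg (c p), sq_nonneg (c (p + 2))]
  refine le_of_mul_le_mul_right ?_ hpos
  linarith

theorem stmt11_general {V W : Type*} [Fintype V] [Fintype W] (F : SimpleGraph V) (R : Set V)
    (G : SimpleGraph W) (S : Set W) (a b : ℝ)
    (hF : Filter.Tendsto (fun ℓ => minEig (pathExt F R ℓ)) Filter.atTop (nhds a))
    (hG : Filter.Tendsto (fun ℓ => minEig (pathExt G S ℓ)) Filter.atTop (nhds b)) :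
    Filter.Tendsto (fun ℓ => minEig (pathAug F R G S ℓ)) Filter.atTop (nhds (min a b)) := by
  have hantiF : Antitone fun ℓ => minEig (pathExt F R ℓ) :=
    antitone_nat_of_succ_le fun ℓ => minEig_le_of_embedding (pathExtEmbeddingSucc F R ℓ)
  have hantiG : Antitone fun ℓ => minEig (pathExt G S ℓ) :=
    antitone_nat_of_succ_le fun ℓ => minEig_le_of_embedding (pathExtEmbeddingSucc G S ℓ)
  have hupper : ∀ ℓ, minEig (pathAug F R G S ℓ)
      ≤ min (minEig (pathExt F R ℓ)) (minEig (pathExt G S ℓ)) := fun ℓ =>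
    le_min (minEig_le_of_embedding (pathExtEmbeddingPathAugLeft F R G S ℓ))
      (minEig_le_of_embedding (pathExtEmbeddingPathAugRight F R G S ℓ))
  have hlower : ∀ n, 0 < n → min a b - 6 / n ≤ minEig (pathAug F R G S (n + 1)) := fun n hn =>
    sub_div_le_minEig_pathAug F R G S
      (fun p => (min_le_left a b).trans (hantiF.le_of_tendsto hF p))
      (fun q => (min_le_right a b).trans (hantiG.le_of_tendsto hG q)) hn
  rw [← tendsto_add_atTop_iff_nat 1]
  refine tendsto_of_tendsto_of_tendsto_of_le_of_le' (g := fun n : ℕ => min a b - 6 / (n : ℝ))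
    ?_ ((hF.min hG).comp (tendsto_add_atTop_nat 1)) ?_
    (Eventually.of_forall fun n => hupper (n + 1))
  · simpa using tendsto_const_nhds.sub (tendsto_const_div_atTop_nhds_zero_nat (6 : ℝ))
  · filter_upwards [eventually_gt_atTop 0] with n hn using hlower n hn

/-- `lim_{ℓ→∞} λ₁(F_R, ℓ, G_S) = min (lim_{ℓ→∞} λ₁(F_R, ℓ)) (lim_{ℓ→∞} λ₁(G_S, ℓ))`. -/
theorem stmt11 {V W : Type*} [Fintype V] [Fintype W] (F : SimpleGraph V) (R : Set V)
    (hR : R.Nonempty) (G : SimpleGraph W) (S : Set W) (hS : S.Nonempty) (a b : ℝ)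
    (hF : Filter.Tendsto (fun ℓ => minEig (pathExt F R ℓ)) Filter.atTop (nhds a))
    (hG : Filter.Tendsto (fun ℓ => minEig (pathExt G S ℓ)) Filter.atTop (nhds b)) :
    Filter.Tendsto (fun ℓ => minEig (pathAug F R G S ℓ)) Filter.atTop (nhds (min a b)) :=
  stmt11_general F R G S a b hF hG
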